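/- If D is an m × m bibifix-free matrix, then every 2m × 2m matrix whose top-left m × m block and bottom-right m × m block both equal D, with arbitrary other entries, has exactly one bibifix, namely the m × m one. -/

import Mathlib

def topLeft {α : Type*} {n : ℕ} (T : Matrix (Fin n) (Fin n) α) (r : ℕ) (h : r ≤ n) :
    Matrix (Fin r) (Fin r) α :=
  fun a b => T (Fin.castLE h a) (Fin.castLE h b)

def botRight {α : Type*} {n : ℕ} (T : Matrix (Fin n) (Fin n) α) (r : ℕ) (h : r ≤ n) :
    Matrix (Fin r) (Fin r) α :=
  fun a b => T ⟨n - r + a, by have := a.isLt; omega⟩ ⟨n - r + b, by have := b.isLt; omega⟩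

def BibifixFree {α : Type*} {n : ℕ} (T : Matrix (Fin n) (Fin n) α) : Prop :=
  ∀ (r : ℕ) (_ : 1 ≤ r) (h2 : r < n), topLeft T r h2.le ≠ botRight T r h2.le

/-- The two diagonal `m × m` blocks of the `2m × 2m` matrix `M` both equal `D`. -/
def InPhi {α : Type*} {m : ℕ} (D : Matrix (Fin m) (Fin m) α)
    (M : Matrix (Fin (2 * m)) (Fin (2 * m)) α) : Prop :=
  ∀ a b : Fin m,
    M ⟨a, by have := a.isLt; omega⟩ ⟨b, by have := b.isLt; omega⟩ = D a b ∧
    M ⟨m + a, by have := a.isLt; omega⟩ ⟨m + b, by have := b.isLt; omega⟩ = D a b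


/-!
A bibifix of size `r` of a `2m × 2m` matrix `M` says that its `r × r` diagonal blocks at offsets
`0` and `2m - r` coincide. If both `m × m` diagonal blocks of `M` equal `D`, then for `r < m` these
two blocks are the diagonal blocks of `D` at offsets `0` and `m - r`, a bibifix of `D` of size `r`;
for `m < r` their sub-blocks of size `r - m` at offset `m` are the diagonal blocks of `D` at offsets
`0` and `2m - r`, a bibifix of `D` of size `r - m`. For `r = m` both blocks are `D` itself.
-/

def diagBlock {α : Type*} {n : ℕ} (T : Matrix (Fin n) (Fin n) α) (p k : ℕ) (h : p + k ≤ n) :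
    Matrix (Fin k) (Fin k) α :=
  fun a b => T ⟨p + a, by omega⟩ ⟨p + b, by omega⟩

section DiagBlock

variable {α : Type*} {n : ℕ} (T : Matrix (Fin n) (Fin n) α)

theorem topLeft_eq_diagBlock (r : ℕ) (h : r ≤ n) :
    topLeft T r h = diagBlock T 0 r (by omega) := by
  ext a b
  simp only [topLeft, diagBlock, Fin.castLE, Nat.zero_add]

theorem botRight_eq_diagBlock (r : ℕ) (h : r ≤ n) :
    botRight T r h = diagBlock T (n - r) r (by omega) :=
  rfl

theorem diagBlock_diagBlock {p k q l s : ℕ} (h : p + k ≤ n) (h' : q + l ≤ k)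
    (hs : p + q = s) :
    diagBlock (diagBlock T p k h) q l h' = diagBlock T s l (by omega) := by
  subst hs
  ext a b
  simp only [diagBlock, Nat.add_assoc]

theorem inPhi_iff {m : ℕ} (D : Matrix (Fin m) (Fin m) α)
    (M : Matrix (Fin (2 * m)) (Fin (2 * m)) α) :
    InPhi D M ↔ diagBlock M 0 m (by omega) = D ∧ diagBlock M m m (by omega) = D := by
  simp only [InPhi, ← Matrix.ext_iff, diagBlock, Nat.zero_add, forall_and]

end DiagBlock

section InPhi

variable {α : Type*} {m : ℕ} {D : Matrix (Fin m) (Fin m) α}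
  {M : Matrix (Fin (2 * m)) (Fin (2 * m)) α}

theorem InPhi.topLeft_eq_botRight (hM : InPhi D M) :
    topLeft M m (by omega) = botRight M m (by omega) := by
  obtain ⟨hlow, hhigh⟩ := (inPhi_iff D M).1 hM
  rw [topLeft_eq_diagBlock, botRight_eq_diagBlock, hlow, ← hhigh]
  congr 1
  omega

theorem InPhi.topLeft_eq_botRight_of_lt (hM : InPhi D M) {r : ℕ} (hlt : r < m)
    (hbib : topLeft M r (by omega) = botRight M r (by omega)) :
    topLeft D r hlt.le = botRight D r hlt.le := by
  obtain ⟨hlow, hhigh⟩ := (inPhi_iff D M).1 hM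
  rw [topLeft_eq_diagBlock, botRight_eq_diagBlock] at hbib ⊢
  calc diagBlock D 0 r (by omega)
      = diagBlock M 0 r (by omega) := by rw [← hlow, diagBlock_diagBlock _ _ _ (zero_add 0)]
    _ = diagBlock M (2 * m - r) r (by omega) := hbib
    _ = diagBlock D (m - r) r (by omega) := by
      rw [← hhigh, diagBlock_diagBlock _ _ _ (by omega : m + (m - r) = 2 * m - r)]

theorem InPhi.topLeft_eq_botRight_sub_of_gt (hM : InPhi D M) {r : ℕ} (hgt : m < r)
    (hr : r < 2 * m) (hbib : topLeft M r hr.le = botRight M r hr.le) :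
    topLeft D (r - m) (by omega) = botRight D (r - m) (by omega) := by
  obtain ⟨-, hhigh⟩ := (inPhi_iff D M).1 hM
  rw [topLeft_eq_diagBlock, botRight_eq_diagBlock] at hbib ⊢
  calc diagBlock D 0 (r - m) (by omega)
      = diagBlock M m (r - m) (by omega) := by
        rw [← hhigh, diagBlock_diagBlock _ _ _ (add_zero m)]
    _ = diagBlock (diagBlock M 0 r (by omega)) m (r - m) (by omega) :=
      (diagBlock_diagBlock _ _ _ (zero_add m)).symm
    _ = diagBlock (diagBlock M (2 * m - r) r (by omega)) m (r - m) (by omega) := by rw [hbib]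
    _ = diagBlock D (m - (r - m)) (r - m) (by omega) := by
      rw [← hhigh, diagBlock_diagBlock _ _ _ (by omega : 2 * m - r + m = m + (m - (r - m))),
        diagBlock_diagBlock _ _ _ rfl]

end InPhi

theorem stmt_10 {α : Type*} {m : ℕ} (D : Matrix (Fin m) (Fin m) α) (hD : BibifixFree D)
    (M : Matrix (Fin (2 * m)) (Fin (2 * m)) α) (hM : InPhi D M) :
    ∀ (r : ℕ) (_ : 1 ≤ r) (h2 : r < 2 * m),
      topLeft M r h2.le = botRight M r h2.le ↔ r = m := by
  intro r hr hr2
  refine ⟨fun hbib => ?_, fun hrm => ?_⟩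
  · rcases lt_trichotomy r m with hlt | heq | hgt
    · exact absurd (hM.topLeft_eq_botRight_of_lt hlt hbib) (hD r hr hlt)
    · exact heq
    · exact absurd (hM.topLeft_eq_botRight_sub_of_gt hgt hr2 hbib)
        (hD (r - m) (by omega) (by omega))
  · subst hrm
    exact hM.topLeft_eq_botRight
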